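/- arXiv:2312.03686 — 2 statements merged into one kernel-verified Lean document; each statement's English description precedes it below -/
import Mathlib

section
/- There exists a finite simple graph G that is CR-discrete (hence CR-identifiable) but is neither WM-discrete nor WM-identifiable: for some k the color refinement coloring C_k of G is injective, yet two distinct vertices x ≠ y of G satisfy w_k^G(x) = w_k^G(y) for every k, and there is a graph H not isomorphic to G on the same number n of vertices admitting a bijection f: V(G) → V(H) with w_k^G(x) = w_k^H(f(x)) for all x and all 0 ≤ k < n. -/
/-! The witness `G = graphG` has 10 vertices and 21 edges; `H = graphH` arises from it by
exchanging the roles of `7` and `8` for the neighbours `0, 2, 4, 5`. Color refinement separates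
all vertices of `G` after two rounds, since their degree signatures (degree and multiset of
neighbour degrees) are pairwise distinct; the same invariant shows that `G` and `H` are not
isomorphic.

Walk counts propagate along edges, `w_{k+1}(x) = ∑_{y ~ x} w_k(y)`, so once a linear recurrence
holds for every vertex at `k = 0` it holds for all `k`. In both graphs every vertex satisfies
`w_{k+5} = 2 w_k + 3 w_{k+1} - 11 w_{k+2} + 5 w_{k+4}`, so walk-count sequences are determined
by their first five terms, and these agree for the vertices `7, 8` of `G`, and for each vertex
of `G` and the same vertex of `H`. -/

/-- The type of colors produced after `k` rounds of color refinement. -/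
def CRColor : ℕ → Type
  | 0 => Unit
  | k + 1 => CRColor k × Multiset (CRColor k)

/-- The color refinement coloring after `k` rounds: `C 0` is constant, and
`C (k+1) x = (C k x, {{C k y : y ∈ N(x)}})`. -/
noncomputable def crColoring {V : Type*} [Fintype V] (G : SimpleGraph V) :
    (k : ℕ) → V → CRColor k
  | 0 => fun _ => ()
  | k + 1 => fun x =>
      (crColoring G k x, ((G.neighborSet x).toFinite.toFinset.val).map (crColoring G k))

/-- `walkCount G k x` is the number of walks of length `k` in `G` starting at `x`. -/
noncomputable def walkCount {V : Type*} (G : SimpleGraph V) (k : ℕ) (x : V) : ℕ :=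
  Nat.card {p : (y : V) × G.Walk x y // p.2.length = k}

open Finset

theorem LinearRecurrence.eq_of_isSolution_natCast (E : LinearRecurrence ℤ) {u v : ℕ → ℕ}
    (hu : E.IsSolution fun n => (u n : ℤ)) (hv : E.IsSolution fun n => (v n : ℤ))
    (hinit : ∀ n < E.order, u n = v n) : u = v := by
  have huv := (E.eq_iff_eqOn_range_order _ _ hu hv).mpr fun n hn => by
    simp [hinit n (mem_range.mp hn)]
  exact funext fun n => by exact_mod_cast congrFun huv n

section WalkCount

variable {V : Type*} [Fintype V] (G : SimpleGraph V) [DecidableRel G.Adj]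

theorem walkCount_eq_sum_adjMatrix_pow [DecidableEq V] (k : ℕ) (x : V) :
    walkCount G k x = ∑ y, (G.adjMatrix ℕ ^ k) x y := by
  let e : {p : (y : V) × G.Walk x y // p.2.length = k} ≃
      (y : V) × {w : G.Walk x y // w.length = k} :=
    { toFun := fun p => ⟨p.1.1, p.1.2, p.2⟩
      invFun := fun q => ⟨⟨q.1, q.2.1⟩, q.2.2⟩
      left_inv := fun _ => rfl
      right_inv := fun _ => rfl }
  rw [walkCount, Nat.card_congr e, Nat.card_eq_fintype_card, Fintype.card_sigma]
  refine sum_congr rfl fun y _ => ?_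
  rw [SimpleGraph.adjMatrix_pow_apply_eq_card_walk, Nat.cast_id]
  exact Fintype.card_congr (Equiv.refl _)

theorem walkCount_zero (x : V) : walkCount G 0 x = 1 := by
  classical
  simp [walkCount_eq_sum_adjMatrix_pow, Matrix.one_apply]

theorem walkCount_succ (k : ℕ) (x : V) :
    walkCount G (k + 1) x = ∑ y ∈ G.neighborFinset x, walkCount G k y := by
  classical
  simp only [walkCount_eq_sum_adjMatrix_pow, pow_succ', Matrix.mul_apply]
  rw [sum_comm, G.neighborFinset_eq_filter, sum_filter]
  refine sum_congr rfl fun y _ => ?_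
  rw [← mul_sum, SimpleGraph.adjMatrix_apply]
  split_ifs <;> simp

theorem walkCount_isSolution (E : LinearRecurrence ℤ)
    (h : ∀ x, (walkCount G E.order x : ℤ) = ∑ i, E.coeffs i * walkCount G i x) (x : V) :
    E.IsSolution fun k => (walkCount G k x : ℤ) := by
  intro n
  induction n generalizing x with
  | zero => simpa using h x
  | succ n ih =>
    calc (walkCount G (n + 1 + E.order) x : ℤ)
        = ∑ y ∈ G.neighborFinset x, ∑ i, E.coeffs i * (walkCount G (n + i) y : ℤ) := by
          rw [Nat.add_right_comm, walkCount_succ]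
          push_cast
          exact sum_congr rfl fun y _ => ih y
      _ = ∑ i, E.coeffs i * (walkCount G (n + 1 + i) x : ℤ) := by
          simp_rw [Nat.add_right_comm n 1, walkCount_succ, Nat.cast_sum, mul_sum]
          exact sum_comm

/-- Walk counts by their recursion, in a form that `decide` evaluates. -/
def walkCountRec : ℕ → V → ℕ
  | 0, _ => 1
  | k + 1, x => ∑ y with G.Adj x y, walkCountRec k y

theorem walkCount_eq_walkCountRec (k : ℕ) : walkCount G k = walkCountRec G k := by
  induction k with
  | zero => exact funext (walkCount_zero G)
  | succ k ih => funext x; rw [walkCount_succ, ih, G.neighborFinset_eq_filter]; rfl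

end WalkCount

section DegreeSignature

variable {V W : Type*} [Fintype V] [Fintype W] {G : SimpleGraph V} {H : SimpleGraph W}
  [DecidableRel G.Adj] [DecidableRel H.Adj]

variable (G) in
def degreeSignature (x : V) : ℕ × Multiset ℕ :=
  (G.degree x, (G.neighborFinset x).val.map fun y => G.degree y)

theorem SimpleGraph.Iso.neighborFinset_apply (φ : G ≃g H) (x : V) :
    H.neighborFinset (φ x) = (G.neighborFinset x).map φ.toEquiv.toEmbedding := by
  ext y
  obtain ⟨z, rfl⟩ := φ.surjective y
  simp only [SimpleGraph.mem_neighborFinset, mem_map_equiv]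
  exact φ.map_adj_iff.trans (by erw [φ.toEquiv.symm_apply_apply])

theorem SimpleGraph.Iso.degree_apply (φ : G ≃g H) (x : V) : H.degree (φ x) = G.degree x := by
  rw [← SimpleGraph.card_neighborFinset_eq_degree, φ.neighborFinset_apply, card_map,
    SimpleGraph.card_neighborFinset_eq_degree]

theorem SimpleGraph.Iso.degreeSignature_apply (φ : G ≃g H) (x : V) :
    degreeSignature H (φ x) = degreeSignature G x := by
  simp [degreeSignature, φ.neighborFinset_apply, φ.degree_apply]

variable (G)

theorem crColoring_succ_snd (k : ℕ) (x : V) :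
    (crColoring G (k + 1) x).2 = (G.neighborFinset x).val.map (crColoring G k) := by
  have hN : (G.neighborSet x).toFinite.toFinset = G.neighborFinset x := by ext; simp
  rw [← hN]
  rfl

theorem card_snd_crColoring_one (x : V) : Multiset.card (crColoring G 1 x).2 = G.degree x := by
  rw [crColoring_succ_snd, Multiset.card_map, card_val, G.card_neighborFinset_eq_degree]

theorem degreeSignature_eq_crColoring_two (x : V) :
    degreeSignature G x = (Multiset.card (crColoring G 2 x).1.2,
      (crColoring G 2 x).2.map fun c => Multiset.card c.2) := by
  rw [crColoring_succ_snd, Multiset.map_map]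
  exact Prod.ext (card_snd_crColoring_one G x).symm
    (Multiset.map_congr rfl fun y _ => (card_snd_crColoring_one G y).symm)

theorem crColoring_two_injective (h : Function.Injective (degreeSignature G)) :
    Function.Injective (crColoring G 2) := fun x y hxy =>
  h <| by rw [degreeSignature_eq_crColoring_two, degreeSignature_eq_crColoring_two, hxy]

end DegreeSignature

def graphG : SimpleGraph (Fin 10) := SimpleGraph.fromRel fun i j => (i, j) ∈
  [(0, 3), (0, 5), (0, 6), (0, 8), (1, 2), (1, 5), (1, 7), (2, 3), (2, 4), (2, 8), (3, 4),
   (3, 5), (3, 6), (3, 8), (4, 7), (5, 6), (5, 7), (6, 7), (6, 9), (7, 8), (8, 9)]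

def graphH : SimpleGraph (Fin 10) := SimpleGraph.fromRel fun i j => (i, j) ∈
  [(0, 3), (0, 5), (0, 6), (0, 7), (1, 2), (1, 5), (1, 7), (2, 3), (2, 4), (2, 7), (3, 4),
   (3, 5), (3, 6), (3, 8), (4, 8), (5, 6), (5, 8), (6, 7), (6, 9), (7, 8), (8, 9)]

instance : DecidableRel graphG.Adj := inferInstanceAs (DecidableRel (SimpleGraph.fromRel _).Adj)

instance : DecidableRel graphH.Adj := inferInstanceAs (DecidableRel (SimpleGraph.fromRel _).Adj)

/-- `X^5 - 5X^4 + 11X^2 - 3X - 2` annihilates the all-ones vector under the adjacency matrices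
of both `graphG` and `graphH`. -/
def walkRecurrence : LinearRecurrence ℤ := ⟨5, ![2, 3, -11, 0, 5]⟩

theorem walkCount_graphG_isSolution (x : Fin 10) :
    walkRecurrence.IsSolution fun k => (walkCount graphG k x : ℤ) :=
  walkCount_isSolution graphG walkRecurrence (by simp only [walkCount_eq_walkCountRec]; decide) x

theorem walkCount_graphH_isSolution (x : Fin 10) :
    walkRecurrence.IsSolution fun k => (walkCount graphH k x : ℤ) :=
  walkCount_isSolution graphH walkRecurrence (by simp only [walkCount_eq_walkCountRec]; decide) x

theorem degreeSignature_graphG_injective : Function.Injective (degreeSignature graphG) := by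
  unfold Function.Injective
  decide

theorem graphG_not_iso_graphH : ¬ Nonempty (graphG ≃g graphH) := by
  rintro ⟨φ⟩
  have hsig : ∀ y, degreeSignature graphH y ≠ degreeSignature graphG 8 := by decide
  exact hsig (φ 8) (φ.degreeSignature_apply 8)

/-- There is a graph `G` that is CR-discrete, but is neither WM-discrete (two distinct
vertices have equal walk counts of every length) nor WM-identifiable (some
non-isomorphic graph `H` on the same number of vertices admits a bijection matching all
walk counts `w_k` for `k < n`). -/
theorem CRdiscrete_not_WMdiscrete_not_WMidentifiable :
    ∃ (n : ℕ) (G : SimpleGraph (Fin n)),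
      (∃ k : ℕ, Function.Injective (crColoring G k)) ∧
      (∃ x y : Fin n, x ≠ y ∧ ∀ k : ℕ, walkCount G k x = walkCount G k y) ∧
      (∃ H : SimpleGraph (Fin n), ¬ Nonempty (G ≃g H) ∧
        ∃ f : Fin n ≃ Fin n, ∀ x : Fin n, ∀ k < n, walkCount G k x = walkCount H k (f x)) := by
  have h78 : ∀ k, walkCount graphG k 7 = walkCount graphG k 8 := congrFun <|
    walkRecurrence.eq_of_isSolution_natCast (walkCount_graphG_isSolution 7)
      (walkCount_graphG_isSolution 8) (by simp only [walkCount_eq_walkCountRec]; decide)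
  have hGH : ∀ x k, walkCount graphG k x = walkCount graphH k x := fun x => congrFun <|
    walkRecurrence.eq_of_isSolution_natCast (walkCount_graphG_isSolution x)
      (walkCount_graphH_isSolution x) (by simp only [walkCount_eq_walkCountRec]; decide +revert)
  exact ⟨10, graphG, ⟨2, crColoring_two_injective graphG degreeSignature_graphG_injective⟩,
    ⟨7, 8, by decide, h78⟩, graphH, graphG_not_iso_graphH, Equiv.refl _, fun x k _ => hGH x k⟩
end

section
/- Every CR-discrete finite simple graph is CR-identifiable: if for some k the color refinement coloring of a graph G is injective on V(G), then color refinement distinguishes G from every graph H that is not isomorphic to G. -/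
/-- Color refinement, run on the disjoint union of `G` and `H`, distinguishes `G`
and `H`: for some `k` the multisets of `C_k`-colors on the two sides differ. -/
noncomputable def crDistinguishes {α β : Type} [Fintype α] [Fintype β]
    (G : SimpleGraph α) (H : SimpleGraph β) : Prop :=
  ∃ k : ℕ,
    (Finset.univ : Finset α).val.map (fun x => crColoring (G ⊕g H) k (Sum.inl x)) ≠
    (Finset.univ : Finset β).val.map (fun y => crColoring (G ⊕g H) k (Sum.inr y))

lemma crColoring_sum_inl {α β : Type} [Fintype α] [Fintype β]
    (G : SimpleGraph α) (H : SimpleGraph β) :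
    ∀ (k : ℕ) (x : α), crColoring (G ⊕g H) k (Sum.inl x) = crColoring G k x := by
  intro k
  induction k with
  | zero => intro x; rfl
  | succ k ih =>
    intro x
    simp only [crColoring]
    refine Prod.ext (ih x) ?_
    have hset : ((G ⊕g H).neighborSet (Sum.inl x)).toFinite.toFinset
        = (G.neighborSet x).toFinite.toFinset.map ⟨Sum.inl, Sum.inl_injective⟩ := by
      ext a
      cases a with
      | inl a => simp [SimpleGraph.neighborSet]
      | inr a => simp [SimpleGraph.neighborSet]
    rw [hset]
    simp only [Finset.map_val, Multiset.map_map]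
    exact Multiset.map_congr rfl (fun y _ => ih y)

lemma crColoring_sum_inr {α β : Type} [Fintype α] [Fintype β]
    (G : SimpleGraph α) (H : SimpleGraph β) :
    ∀ (k : ℕ) (y : β), crColoring (G ⊕g H) k (Sum.inr y) = crColoring H k y := by
  intro k
  induction k with
  | zero => intro x; rfl
  | succ k ih =>
    intro x
    simp only [crColoring]
    refine Prod.ext (ih x) ?_
    have hset : ((G ⊕g H).neighborSet (Sum.inr x)).toFinite.toFinset
        = (H.neighborSet x).toFinite.toFinset.map ⟨Sum.inr, Sum.inr_injective⟩ := by
      ext a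
      cases a with
      | inl a => simp [SimpleGraph.neighborSet]
      | inr a => simp [SimpleGraph.neighborSet]
    rw [hset]
    simp only [Finset.map_val, Multiset.map_map]
    exact Multiset.map_congr rfl (fun y _ => ih y)

theorem CRdiscrete_implies_CRidentifiable' {α : Type} [Fintype α] (G : SimpleGraph α)
    (hdisc : ∃ k : ℕ, Function.Injective (crColoring G k)) :
    ∀ (β : Type) (_ : Fintype β) (H : SimpleGraph β),
      ¬ Nonempty (G ≃g H) → (∀ k : ℕ,
    (Finset.univ : Finset α).val.map (fun x => crColoring (G ⊕g H) k (Sum.inl x)) =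
    (Finset.univ : Finset β).val.map (fun y => crColoring (G ⊕g H) k (Sum.inr y))) → False := by
  intro β _ H hniso hnd
  apply hniso
  have heq : ∀ k, (Finset.univ : Finset α).val.map (crColoring G k) =
      (Finset.univ : Finset β).val.map (crColoring H k) := by
    intro k
    simpa [crColoring_sum_inl, crColoring_sum_inr] using hnd k
  obtain ⟨k₀, hinjG⟩ := hdisc
  have hcard : Fintype.card α = Fintype.card β := by
    have := congrArg Multiset.card (heq 0)
    simpa using this
  have hinj' : ∀ k, Function.Injective (crColoring G k) → Function.Injective (crColoring H k) := by
    intro k hk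
    have hndp : ((Finset.univ : Finset β).val.map (crColoring H k)).Nodup := by
      rw [← heq k]
      exact Finset.univ.nodup.map hk
    intro a b hab
    exact Multiset.inj_on_of_nodup_map hndp a (by simp) b (by simp) hab
  have hinjH : Function.Injective (crColoring H k₀) := hinj' k₀ hinjG
  have hinjG1 : Function.Injective (crColoring G (k₀ + 1)) := by
    intro a b h
    simp only [crColoring] at h
    exact hinjG (congrArg Prod.fst h)
  have hmem : ∀ x : α, ∃ y : β, crColoring H (k₀ + 1) y = crColoring G (k₀ + 1) x := by
    intro x
    have hx : crColoring G (k₀ + 1) x ∈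
        (Finset.univ : Finset β).val.map (crColoring H (k₀ + 1)) := by
      rw [← heq]
      exact Multiset.mem_map_of_mem _ (by simp)
    obtain ⟨y, -, hy⟩ := Multiset.mem_map.1 hx
    exact ⟨y, hy⟩
  choose φ hφ using hmem
  have hφinj : Function.Injective φ := by
    intro a b hab
    apply hinjG1
    rw [← hφ a, ← hφ b, hab]
  have hbij : Function.Bijective φ :=
    (Fintype.bijective_iff_injective_and_card φ).2 ⟨hφinj, hcard⟩
  have hc : ∀ x, crColoring H k₀ (φ x) = crColoring G k₀ x := by
    intro x
    have := hφ x
    simp only [crColoring] at this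
    exact congrArg Prod.fst this
  have hN : ∀ x, (H.neighborSet (φ x)).toFinite.toFinset.val.map (crColoring H k₀)
      = (G.neighborSet x).toFinite.toFinset.val.map (crColoring G k₀) := by
    intro x
    have := hφ x
    simp only [crColoring] at this
    exact congrArg Prod.snd this
  have hadj : ∀ x y, G.Adj x y ↔ H.Adj (φ x) (φ y) := by
    intro x y
    constructor
    · intro hxy
      have hy : crColoring G k₀ y ∈
          (G.neighborSet x).toFinite.toFinset.val.map (crColoring G k₀) :=
        Multiset.mem_map_of_mem _ (by simp [hxy])
      rw [← hN x] at hy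
      obtain ⟨z, hz, hz2⟩ := Multiset.mem_map.1 hy
      have hzy : z = φ y := hinjH (hz2.trans (hc y).symm)
      subst hzy
      simpa using hz
    · intro hxy
      have hy : crColoring H k₀ (φ y) ∈
          (H.neighborSet (φ x)).toFinite.toFinset.val.map (crColoring H k₀) :=
        Multiset.mem_map_of_mem _ (by simp [hxy])
      rw [hN x] at hy
      obtain ⟨w, hw, hw2⟩ := Multiset.mem_map.1 hy
      have hwy : w = y := hinjG (hw2.trans (hc y))
      subst hwy
      simpa using hw
  exact ⟨⟨Equiv.ofBijective φ hbij, fun {a b} => (hadj a b).symm⟩⟩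

/-- Every CR-discrete graph is CR-identifiable: if for some `k` the color refinement
coloring of `G` is injective on `V(G)`, then color refinement distinguishes `G` from
every graph `H` not isomorphic to `G`. -/
theorem CRdiscrete_implies_CRidentifiable {α : Type} [Fintype α] (G : SimpleGraph α)
    (hdisc : ∃ k : ℕ, Function.Injective (crColoring G k)) :
    ∀ (β : Type) (_ : Fintype β) (H : SimpleGraph β),
      ¬ Nonempty (G ≃g H) → crDistinguishes G H := by
  intro β inst H hniso
  rw [crDistinguishes]
  by_contra hnd
  push_neg at hnd
  exact CRdiscrete_implies_CRidentifiable' G hdisc β inst H hniso hnd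
end
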